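/- Every 3-copula C satisfies r_3 κ_3(C) = (1/2) r_3 r_2 (κ_2(C_1) + κ_2(C_2) + κ_2(C_3)) for any multivariate measure of concordance κ; equivalently, since r_2 = 2/3, κ_3(C) = (1/3)(κ_2(C_1) + κ_2(C_2) + κ_2(C_3)). -/

import Mathlib

open MeasureTheory Filter

noncomputable section

/-- The unit cube `I^n ⊆ ℝ^n`. -/
def cube (n : ℕ) : Set (Fin n → ℝ) := Set.univ.pi fun _ => Set.Icc (0:ℝ) 1

/-- The box `[0,x] = [0,x_1] × ⋯ × [0,x_n]`. -/
def box {n : ℕ} (x : Fin n → ℝ) : Set (Fin n → ℝ) := Set.univ.pi fun i => Set.Icc 0 (x i)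

/-- `C` is an `n`-copula: on `I^n` it is the box-distribution function of a probability
measure all of whose one-dimensional margins are uniform on `[0,1]`. -/
def IsCopula {n : ℕ} (C : (Fin n → ℝ) → ℝ) : Prop :=
  ∃ μ : Measure (Fin n → ℝ), IsProbabilityMeasure μ ∧
    (∀ x ∈ cube n, C x = (μ (box x)).toReal) ∧
    (∀ i : Fin n, μ.map (fun y => y i) = volume.restrict (Set.Icc (0:ℝ) 1))

/-- The action `τ*(C) = C ∘ τ` of a coordinate permutation (with index permutation `τ`). -/
def permTrans {n : ℕ} (τ : Equiv.Perm (Fin n)) (C : (Fin n → ℝ) → ℝ) : (Fin n → ℝ) → ℝ :=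
  fun x => C fun i => x (τ i)

/-- The action `σ_S*(C)(x) = μ_C(σ_S([0,x]))` of the reflection `σ_S`, written out by
inclusion–exclusion in terms of the values of `C`. -/
def reflTrans {n : ℕ} (S : Finset (Fin n)) (C : (Fin n → ℝ) → ℝ) : (Fin n → ℝ) → ℝ :=
  fun x => ∑ T ∈ S.powerset, (-1 : ℝ) ^ T.card *
    C (fun i => if i ∈ T then 1 - x i else if i ∈ S then 1 else x i)

/-- The comonotone copula `M(t_1,…,t_n) = min(t_1,…,t_n)`. -/
def Mcop (n : ℕ) : (Fin n → ℝ) → ℝ := fun x => iInf x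

/-- The independence copula `Π(t_1,…,t_n) = t_1 ⋯ t_n`. -/
def Pcop (n : ℕ) : (Fin n → ℝ) → ℝ := fun x => ∏ i, x i

/-- The proper `(n - card P)`-copula of the extended marginal `C_P` of `C`:
coordinates in `P` are set equal to `1` and the remaining coordinates are relabelled
in increasing order. -/
def properMarg {n : ℕ} (C : (Fin n → ℝ) → ℝ) (P : Finset (Fin n)) :
    (Fin (Pᶜ.card) → ℝ) → ℝ :=
  fun y => C fun i => if h : i ∈ Pᶜ then y ((Pᶜ.orderIsoOfFin rfl).symm ⟨i, h⟩) else 1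

/-- A multivariate measure of concordance `κ = ({κ_n},{r_n})` in the sense of Taylor:
normalization, monotonicity, continuity, permutation invariance, duality, the
reflection symmetry property and the transition property, extended by `κ_0 = κ_1 = 0`. -/
structure ConcordanceMeasure where
  κ : (n : ℕ) → ((Fin n → ℝ) → ℝ) → ℝ
  r : ℕ → ℝ
  kappa_zero : ∀ C, κ 0 C = 0
  kappa_one : ∀ C, κ 1 C = 0
  normM : ∀ n, 2 ≤ n → κ n (Mcop n) = 1
  normPi : ∀ n, 2 ≤ n → κ n (Pcop n) = 0
  mono : ∀ n, 2 ≤ n → ∀ A B : (Fin n → ℝ) → ℝ, IsCopula A → IsCopula B →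
    (∀ x ∈ cube n, A x ≤ B x) →
    (∀ x ∈ cube n, reflTrans Finset.univ A x ≤ reflTrans Finset.univ B x) →
    κ n A ≤ κ n B
  cont : ∀ n, 2 ≤ n → ∀ (C : (Fin n → ℝ) → ℝ) (Cm : ℕ → (Fin n → ℝ) → ℝ),
    IsCopula C → (∀ m, IsCopula (Cm m)) →
    TendstoUniformlyOn Cm C atTop (cube n) →
    Tendsto (fun m => κ n (Cm m)) atTop (nhds (κ n C))
  permInv : ∀ n, 2 ≤ n → ∀ C : (Fin n → ℝ) → ℝ, IsCopula C →
    ∀ τ : Equiv.Perm (Fin n), κ n (permTrans τ C) = κ n C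
  duality : ∀ n, 2 ≤ n → ∀ C : (Fin n → ℝ) → ℝ, IsCopula C →
    κ n (reflTrans Finset.univ C) = κ n C
  rsp : ∀ n, 2 ≤ n → ∀ C : (Fin n → ℝ) → ℝ, IsCopula C →
    ∑ S : Finset (Fin n), κ n (reflTrans S C) = 0
  transition : ∀ n, 2 ≤ n → ∀ (C : (Fin n → ℝ) → ℝ) (E : (Fin (n+1) → ℝ) → ℝ),
    IsCopula C → IsCopula E →
    (∀ x ∈ cube n, C x = E (fun i : Fin (n+1) =>
      if h : (i : ℕ) = 0 then 1 else x ⟨(i : ℕ) - 1, by have := i.isLt; omega⟩)) →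
    r n * κ n C = κ (n+1) E + κ (n+1) (reflTrans {0} E)

/-! The transition property, applied after a coordinate permutation that moves `k` to the front,
gives `r₂ κ₂(C_k) = κ₃(C) + κ₃(σ_{k} C)` for each `k`. In the reflection symmetry property
`∑_S κ₃(σ_S C) = 0` the terms for `S` and `Sᶜ` agree by duality, since `σ_{Sᶜ} C = σ_univ (σ_S C)`;
for three coordinates this leaves `κ₃(C) + ∑_k κ₃(σ_{k} C) = 0`, and summing the three transition
identities gives `r₂ ∑_k κ₂(C_k) = 2 κ₃(C)`.

The technical core is that each `σ_S C` is again a copula: it is the distribution function of the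
image of `μ_C` under the reflection `y ↦ (i ↦ if i ∈ S then 1 - y i else y i)`. This is proved one
coordinate at a time, matching the recursion of the inclusion–exclusion formula for `reflTrans`. -/

namespace Copula

variable {n : ℕ}

lemma mem_cube {x : Fin n → ℝ} : x ∈ cube n ↔ ∀ i, x i ∈ Set.Icc (0:ℝ) 1 := by
  simp only [cube, Set.mem_univ_pi]

lemma update_mem_cube {x : Fin n → ℝ} (hx : x ∈ cube n) (a : Fin n) {t : ℝ}
    (ht : t ∈ Set.Icc (0:ℝ) 1) : Function.update x a t ∈ cube n :=
  Set.update_mem_pi_iff_of_mem hx |>.2 fun _ => ht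

lemma measurableSet_box (x : Fin n → ℝ) : MeasurableSet (box x) :=
  .univ_pi fun _ => measurableSet_Icc

lemma measurable_comp_right {m : ℕ} (g : Fin m → Fin n) :
    Measurable fun (y : Fin n → ℝ) j => y (g j) :=
  measurable_pi_lambda _ fun j => measurable_pi_apply (g j)

def HasUniformMarginals (μ : Measure (Fin n → ℝ)) : Prop :=
  ∀ i, μ.map (fun y => y i) = volume.restrict (Set.Icc (0:ℝ) 1)

namespace HasUniformMarginals

variable {μ : Measure (Fin n → ℝ)} (hμ : HasUniformMarginals μ)
include hμ

lemma measure_coord_eq (i : Fin n) (c : ℝ) : μ {y | y i = c} = 0 := by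
  rw [show {y : Fin n → ℝ | y i = c} = (fun y => y i) ⁻¹' {c} from rfl,
    ← Measure.map_apply (measurable_pi_apply i) (measurableSet_singleton c), hμ i,
    Measure.restrict_apply (measurableSet_singleton c)]
  exact measure_mono_null Set.inter_subset_left Real.volume_singleton

lemma ae_mem_cube : ∀ᵐ y ∂μ, y ∈ cube n := by
  simp only [mem_cube, ae_all_iff]
  intro i
  have : ∀ᵐ t ∂μ.map (fun y => y i), t ∈ Set.Icc (0:ℝ) 1 := by
    rw [hμ i]; exact ae_restrict_mem measurableSet_Icc
  exact ae_of_ae_map (measurable_pi_apply i).aemeasurable this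

lemma map_comp {m : ℕ} (g : Fin m → Fin n) :
    HasUniformMarginals (μ.map fun y j => y (g j)) := by
  intro j
  rw [Measure.map_map (measurable_pi_apply j) (measurable_comp_right g)]
  exact hμ (g j)

end HasUniformMarginals

lemma map_one_sub_volume_Icc :
    (volume.restrict (Set.Icc (0:ℝ) 1)).map (fun t => 1 - t) = volume.restrict (Set.Icc 0 1) := by
  have h := Measure.restrict_map (μ := volume) (f := fun t : ℝ => 1 - t) (by fun_prop)
    (measurableSet_Icc (a := (0:ℝ)) (b := 1))
  rw [(Measure.measurePreserving_sub_left volume (1:ℝ)).map_eq] at h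
  simpa using h.symm

def reflect (S : Finset (Fin n)) (y : Fin n → ℝ) : Fin n → ℝ :=
  fun i => if i ∈ S then 1 - y i else y i

@[fun_prop]
lemma measurable_reflect (S : Finset (Fin n)) : Measurable (reflect S) := by
  refine measurable_pi_lambda _ fun i => ?_
  unfold reflect
  split_ifs
  · exact measurable_const.sub (measurable_pi_apply i)
  · exact measurable_pi_apply i

@[simp]
lemma reflect_empty : reflect (∅ : Finset (Fin n)) = id := by
  funext y i
  simp [reflect]

lemma reflect_comp_reflect (S T : Finset (Fin n)) :
    reflect S ∘ reflect T = reflect (symmDiff S T) := by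
  funext y i
  simp only [Function.comp_apply, reflect, Finset.mem_symmDiff]
  by_cases hS : i ∈ S <;> by_cases hT : i ∈ T <;> simp [hS, hT]

lemma reflect_singleton (a : Fin n) (y : Fin n → ℝ) :
    reflect {a} y = Function.update y a (1 - y a) := by
  funext i
  by_cases h : i = a <;> simp [reflect, h]

lemma reflect_insert {a : Fin n} {S : Finset (Fin n)} (ha : a ∉ S) :
    reflect (insert a S) = reflect {a} ∘ reflect S := by
  rw [reflect_comp_reflect, Disjoint.symmDiff_eq_sup (Finset.disjoint_singleton_left.2 ha)]
  rfl

lemma HasUniformMarginals.map_reflect {μ : Measure (Fin n → ℝ)} (hμ : HasUniformMarginals μ)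
    (S : Finset (Fin n)) : HasUniformMarginals (μ.map (reflect S)) := by
  intro i
  rw [Measure.map_map (measurable_pi_apply i) (measurable_reflect S)]
  by_cases h : i ∈ S
  · have : (fun y : Fin n → ℝ => y i) ∘ reflect S = (fun t => 1 - t) ∘ fun y => y i := by
      funext y; simp [reflect, h]
    rw [this, ← Measure.map_map (g := fun t : ℝ => 1 - t) (by fun_prop) (measurable_pi_apply i),
      hμ i, map_one_sub_volume_Icc]
  · have : (fun y : Fin n → ℝ => y i) ∘ reflect S = fun y => y i := by
      funext y; simp [reflect, h]
    rw [this, hμ i]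

@[simp]
lemma reflTrans_empty (C : (Fin n → ℝ) → ℝ) : reflTrans ∅ C = C := by
  funext x
  simp [reflTrans]

lemma reflTrans_insert {a : Fin n} {S : Finset (Fin n)} (ha : a ∉ S)
    (C : (Fin n → ℝ) → ℝ) (x : Fin n → ℝ) :
    reflTrans (insert a S) C x =
      reflTrans S C (Function.update x a 1) - reflTrans S C (Function.update x a (1 - x a)) := by
  simp only [reflTrans]
  rw [Finset.sum_powerset_insert ha, sub_eq_add_neg, ← Finset.sum_neg_distrib]
  congr 1 <;> refine Finset.sum_congr rfl fun T hT => ?_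
  all_goals
    have haT : a ∉ T := fun h => ha (Finset.mem_powerset.1 hT h)
  · congr 2
    funext i
    by_cases hi : i = a
    · subst hi; simp [haT, ha]
    · simp [hi]
  · rw [Finset.card_insert_of_notMem haT, pow_succ]
    have : (fun i => if i ∈ insert a T then 1 - x i else if i ∈ insert a S then 1 else x i) =
        fun i => if i ∈ T then 1 - Function.update x a (1 - x a) i
          else if i ∈ S then 1 else Function.update x a (1 - x a) i := by
      funext i
      by_cases hi : i = a
      · subst hi; simp [haT, ha]
      · simp [hi]
    rw [this]
    ring

lemma reflTrans_singleton (a : Fin n) (C : (Fin n → ℝ) → ℝ) (x : Fin n → ℝ) :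
    reflTrans {a} C x = C (Function.update x a 1) - C (Function.update x a (1 - x a)) := by
  simpa using reflTrans_insert (Finset.notMem_empty a) C x

lemma reflTrans_congr_cube {A B : (Fin n → ℝ) → ℝ} (h : ∀ x ∈ cube n, A x = B x)
    (S : Finset (Fin n)) : ∀ x ∈ cube n, reflTrans S A x = reflTrans S B x := by
  induction S using Finset.induction_on with
  | empty => simpa using h
  | insert a S ha ih =>
    intro x hx
    have hxa := mem_cube.1 hx a
    rw [reflTrans_insert ha, reflTrans_insert ha,
      ih _ (update_mem_cube hx a ⟨zero_le_one, le_rfl⟩),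
      ih _ (update_mem_cube hx a ⟨by linarith [hxa.2], by linarith [hxa.1]⟩)]

lemma reflTrans_singleton_permTrans (a : Fin n) (τ : Equiv.Perm (Fin n))
    (C : (Fin n → ℝ) → ℝ) :
    reflTrans {a} (permTrans τ C) = permTrans τ (reflTrans {τ.symm a} C) := by
  funext x
  simp only [reflTrans_singleton, permTrans]
  have hcomp (t : ℝ) : (fun i => Function.update x a t (τ i)) =
      Function.update (fun i => x (τ i)) (τ.symm a) t :=
    Function.update_comp_equiv x τ a t
  rw [hcomp, hcomp, Equiv.apply_symm_apply]

lemma box_update_eq_inter {x : Fin n → ℝ} (a : Fin n) {t : ℝ} (ht : t ≤ 1) :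
    box (Function.update x a t) = box (Function.update x a 1) ∩ {y | y a ≤ t} := by
  ext y
  simp only [box, Set.mem_inter_iff, Set.mem_ofPred_eq, Set.mem_univ_pi]
  rw [Function.forall_update_iff x (fun i v => y i ∈ Set.Icc 0 v),
    Function.forall_update_iff x (fun i v => y i ∈ Set.Icc 0 v)]
  simp only [Set.mem_Icc]
  constructor
  · rintro ⟨⟨h0, h1⟩, h⟩; exact ⟨⟨⟨h0, h1.trans ht⟩, h⟩, h1⟩
  · rintro ⟨⟨⟨h0, -⟩, h⟩, h1⟩; exact ⟨⟨h0, h1⟩, h⟩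

lemma reflect_singleton_preimage_box {x : Fin n → ℝ} {a : Fin n} (hxa : x a ≤ 1) :
    reflect {a} ⁻¹' box x = box (Function.update x a 1) ∩ {y | 1 - x a ≤ y a} := by
  ext y
  simp only [box, reflect_singleton, Set.mem_preimage, Set.mem_inter_iff, Set.mem_ofPred_eq,
    Set.mem_univ_pi]
  rw [Function.forall_update_iff y (fun i v => v ∈ Set.Icc 0 (x i)),
    Function.forall_update_iff x (fun i v => y i ∈ Set.Icc 0 v)]
  simp only [Set.mem_Icc]
  constructor
  · rintro ⟨⟨h0, h1⟩, h⟩; exact ⟨⟨⟨by linarith, by linarith⟩, h⟩, by linarith⟩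
  · rintro ⟨⟨⟨-, h1⟩, h⟩, h0⟩; exact ⟨⟨by linarith, by linarith⟩, h⟩

lemma measure_reflect_singleton_preimage_box (ν : Measure (Fin n → ℝ)) [IsFiniteMeasure ν]
    {x : Fin n → ℝ} (a : Fin n) (hxa : x a ∈ Set.Icc (0:ℝ) 1)
    (hν : ν {y | y a = 1 - x a} = 0) :
    (ν (reflect {a} ⁻¹' box x)).toReal =
      (ν (box (Function.update x a 1))).toReal -
        (ν (box (Function.update x a (1 - x a)))).toReal := by
  set U := box (Function.update x a 1)
  have hunion : (U ∩ {y | 1 - x a ≤ y a}) ∪ (U ∩ {y | y a ≤ 1 - x a}) = U := by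
    rw [← Set.inter_union_distrib_left, Set.inter_eq_left]
    exact fun y _ => le_total (1 - x a) (y a)
  have hinter : (U ∩ {y | 1 - x a ≤ y a}) ∩ (U ∩ {y | y a ≤ 1 - x a}) ⊆ {y | y a = 1 - x a} :=
    fun y hy => le_antisymm hy.2.2 hy.1.2
  have hmeas : MeasurableSet (U ∩ {y | y a ≤ 1 - x a}) :=
    (measurableSet_box _).inter (measurableSet_le (measurable_pi_apply a) measurable_const)
  have h := measure_union_add_inter (μ := ν) (U ∩ {y | 1 - x a ≤ y a}) hmeas
  rw [hunion, measure_mono_null hinter hν, add_zero] at h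
  rw [reflect_singleton_preimage_box hxa.2,
    box_update_eq_inter (t := 1 - x a) a (by linarith [hxa.1]), h,
    ENNReal.toReal_add (measure_ne_top _ _) (measure_ne_top _ _), add_sub_cancel_right]

lemma reflTrans_eq_map_reflect {μ : Measure (Fin n → ℝ)} [IsFiniteMeasure μ]
    {C : (Fin n → ℝ) → ℝ} (hμ : HasUniformMarginals μ)
    (hC : ∀ x ∈ cube n, C x = (μ (box x)).toReal) (S : Finset (Fin n)) :
    ∀ x ∈ cube n, reflTrans S C x = (μ.map (reflect S) (box x)).toReal := by
  induction S using Finset.induction_on with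
  | empty => simpa using hC
  | insert a S ha ih =>
    intro x hx
    have hxa := mem_cube.1 hx a
    rw [reflect_insert ha, ← Measure.map_map (measurable_reflect _) (measurable_reflect _),
      Measure.map_apply (measurable_reflect _) (measurableSet_box x),
      measure_reflect_singleton_preimage_box _ a hxa ((hμ.map_reflect S).measure_coord_eq a _),
      reflTrans_insert ha, ih _ (update_mem_cube hx a ⟨zero_le_one, le_rfl⟩),
      ih _ (update_mem_cube hx a ⟨by linarith [hxa.2], by linarith [hxa.1]⟩)]

lemma isCopula_reflTrans {C : (Fin n → ℝ) → ℝ} (hC : IsCopula C) (S : Finset (Fin n)) :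
    IsCopula (reflTrans S C) := by
  obtain ⟨μ, _, hCμ, hμ : HasUniformMarginals μ⟩ := hC
  exact ⟨μ.map (reflect S), Measure.isProbabilityMeasure_map (measurable_reflect S).aemeasurable,
    reflTrans_eq_map_reflect hμ hCμ S, hμ.map_reflect S⟩

lemma isCopula_permTrans {C : (Fin n → ℝ) → ℝ} (hC : IsCopula C) (τ : Equiv.Perm (Fin n)) :
    IsCopula (permTrans τ C) := by
  obtain ⟨μ, _, hCμ, hμ : HasUniformMarginals μ⟩ := hC
  have hpre (x : Fin n → ℝ) : (fun y j => y (τ.symm j)) ⁻¹' box x = box fun i => x (τ i) := by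
    ext y
    simp only [box, Set.mem_preimage, Set.mem_univ_pi]
    exact ⟨fun h i => by simpa using h (τ i), fun h i => by simpa using h (τ.symm i)⟩
  refine ⟨μ.map fun (y : Fin n → ℝ) j => y (τ.symm j),
    Measure.isProbabilityMeasure_map (measurable_comp_right _).aemeasurable,
    fun x hx => ?_, hμ.map_comp τ.symm⟩
  rw [Measure.map_apply (measurable_comp_right _) (measurableSet_box x), hpre]
  exact hCμ _ (mem_cube.2 fun i => mem_cube.1 hx (τ i))

lemma isCopula_properMarg {C : (Fin n → ℝ) → ℝ} (hC : IsCopula C) (P : Finset (Fin n)) :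
    IsCopula (properMarg C P) := by
  obtain ⟨μ, _, hCμ, hμ : HasUniformMarginals μ⟩ := hC
  set e := Pᶜ.orderIsoOfFin rfl
  refine ⟨μ.map fun (y : Fin n → ℝ) j => y (e j),
    Measure.isProbabilityMeasure_map (measurable_comp_right _).aemeasurable,
    fun x hx => ?_, hμ.map_comp _⟩
  set z : Fin n → ℝ := fun i => if h : i ∈ Pᶜ then x (e.symm ⟨i, h⟩) else 1
  have hz : z ∈ cube n := mem_cube.2 fun i => by
    by_cases h : i ∈ Pᶜ
    · simpa only [z, dif_pos h] using mem_cube.1 hx _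
    · simpa only [z, dif_neg h] using Set.right_mem_Icc.2 zero_le_one
  have hze (j : Fin Pᶜ.card) : z (e j) = x j := by
    simp only [z, dif_pos (e j).2, Subtype.coe_eta, OrderIso.symm_apply_apply]
  have hpre : cube n ∩ (fun y j => y (e j)) ⁻¹' box x = box z := by
    ext y
    simp only [box, Set.mem_inter_iff, Set.mem_preimage, Set.mem_univ_pi, mem_cube]
    constructor
    · rintro ⟨hy, hyx⟩ i
      by_cases h : i ∈ Pᶜ
      · simpa only [z, dif_pos h, OrderIso.apply_symm_apply] using hyx (e.symm ⟨i, h⟩)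
      · simpa only [z, dif_neg h] using hy i
    · intro hy
      refine ⟨fun i => ⟨(hy i).1, (hy i).2.trans (mem_cube.1 hz i).2⟩, fun j => ?_⟩
      simpa [hze] using hy (e j)
  rw [Measure.map_apply (measurable_comp_right _) (measurableSet_box x),
    ← Measure.measure_inter_eq_of_ae hμ.ae_mem_cube, hpre, ← hCμ z hz]
  rfl

lemma properMarg_singleton_apply (C : (Fin (n + 1) → ℝ) → ℝ) (k : Fin (n + 1))
    (h : ({k}ᶜ : Finset (Fin (n + 1))).card = n) (y : Fin ({k}ᶜ : Finset _).card → ℝ) :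
    properMarg C {k} y = C (k.insertNth 1 fun j => y (Fin.cast h.symm j)) := by
  refine congrArg C (funext fun i => ?_)
  cases i using Fin.succAboveCases k with
  | x => simp
  | p j =>
    have hmem : k.succAbove j ∈ ({k}ᶜ : Finset _) := by simp [Fin.succAbove_ne]
    have he : (({k}ᶜ : Finset _).orderIsoOfFin rfl).symm ⟨k.succAbove j, hmem⟩ =
        Fin.cast h.symm j := by
      rw [OrderIso.symm_apply_eq, Subtype.ext_iff, Finset.coe_orderIsoOfFin_apply,
        Finset.orderEmbOfFin_compl_singleton_apply]
      rfl
    simp only [dif_pos hmem, he, Fin.insertNth_apply_succAbove]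

end Copula

namespace ConcordanceMeasure

open Copula

variable (κ : ConcordanceMeasure) {n : ℕ}

lemma kappa_congr (hn : 2 ≤ n) {A B : (Fin n → ℝ) → ℝ} (hA : IsCopula A) (hB : IsCopula B)
    (h : ∀ x ∈ cube n, A x = B x) : κ.κ n A = κ.κ n B := by
  have hσ := reflTrans_congr_cube h Finset.univ
  exact le_antisymm
    (κ.mono n hn A B hA hB (fun x hx => (h x hx).le) (fun x hx => (hσ x hx).le))
    (κ.mono n hn B A hB hA (fun x hx => (h x hx).ge) (fun x hx => (hσ x hx).ge))

lemma kappa_reflTrans_compl (hn : 2 ≤ n) {C : (Fin n → ℝ) → ℝ} (hC : IsCopula C)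
    (S : Finset (Fin n)) : κ.κ n (reflTrans Sᶜ C) = κ.κ n (reflTrans S C) := by
  have hCS := isCopula_reflTrans hC S
  rw [← κ.duality n hn _ hCS]
  refine κ.kappa_congr hn (isCopula_reflTrans hC _) (isCopula_reflTrans hCS _) fun x hx => ?_
  obtain ⟨μ, _, hCμ, hμ : HasUniformMarginals μ⟩ := hC
  rw [reflTrans_eq_map_reflect hμ hCμ _ x hx,
    reflTrans_eq_map_reflect (hμ.map_reflect S) (reflTrans_eq_map_reflect hμ hCμ S) _ x hx,
    Measure.map_map (measurable_reflect _) (measurable_reflect _), reflect_comp_reflect,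
    ← Finset.top_eq_univ, top_symmDiff]
  rfl

lemma transition_insertNth (hn : 2 ≤ n) {C : (Fin (n + 1) → ℝ) → ℝ} (hC : IsCopula C)
    (k : Fin (n + 1)) {D : (Fin n → ℝ) → ℝ} (hD : IsCopula D)
    (hDC : ∀ x ∈ cube n, D x = C (k.insertNth 1 x)) :
    κ.r n * κ.κ n D = κ.κ (n + 1) C + κ.κ (n + 1) (reflTrans {k} C) := by
  have hcons (x : Fin n → ℝ) : (fun i : Fin (n + 1) =>
      if h : (i : ℕ) = 0 then 1 else x ⟨(i : ℕ) - 1, by omega⟩) = Fin.cons 1 x := by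
    funext i
    cases i using Fin.cases with
    | zero => rfl
    | succ j => simp
  have hn' : 2 ≤ n + 1 := by omega
  -- `k.cycleRange` moves coordinate `k` to the front, where the transition property applies.
  rw [κ.transition n hn D (permTrans k.cycleRange C) hD (isCopula_permTrans hC _) fun x hx => by
      rw [hDC x hx, hcons, permTrans, ← Fin.cons_comp_cycleRange]; rfl,
    κ.permInv _ hn' C hC, reflTrans_singleton_permTrans, Fin.cycleRange_symm_zero,
    κ.permInv _ hn' _ (isCopula_reflTrans hC _)]

end ConcordanceMeasure

lemma sum_finset_fin_three_of_compl (f : Finset (Fin 3) → ℝ) (hf : ∀ S, f Sᶜ = f S) :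
    ∑ S, f S = 2 * (f ∅ + f {0} + f {1} + f {2}) := by
  have huniv : (Finset.univ : Finset (Finset (Fin 3))) =
      {∅, {0}, {1}, {2}, {0}ᶜ, {1}ᶜ, {2}ᶜ, ∅ᶜ} := by decide
  rw [huniv]
  simp +decide only [Finset.sum_insert, Finset.mem_insert,
    Finset.mem_singleton, Finset.sum_singleton, hf]
  ring

open Copula

/-- The Úbeda identity for 3-copulas:
`r_3 κ_3(C) = (1/2) r_3 r_2 (κ_2(C_1) + κ_2(C_2) + κ_2(C_3))`; equivalently, since
`r_2 = 2/3`, `κ_3(C) = (1/3)(κ_2(C_1) + κ_2(C_2) + κ_2(C_3))`. -/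
theorem stmt17 (κ : ConcordanceMeasure) (hr2 : κ.r 2 = 2/3)
    (C : (Fin 3 → ℝ) → ℝ) (hC : IsCopula C) :
    κ.r 3 * κ.κ 3 C =
      (1/2) * (κ.r 3 * κ.r 2 *
        (κ.κ (({0} : Finset (Fin 3))ᶜ.card) (properMarg C {0}) +
         κ.κ (({1} : Finset (Fin 3))ᶜ.card) (properMarg C {1}) +
         κ.κ (({2} : Finset (Fin 3))ᶜ.card) (properMarg C {2}))) ∧
    κ.κ 3 C =
      (1/3) * (κ.κ (({0} : Finset (Fin 3))ᶜ.card) (properMarg C {0}) +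
               κ.κ (({1} : Finset (Fin 3))ᶜ.card) (properMarg C {1}) +
               κ.κ (({2} : Finset (Fin 3))ᶜ.card) (properMarg C {2})) := by
  have h0 := κ.transition_insertNth le_rfl hC 0 (isCopula_properMarg hC {0})
    fun x _ => properMarg_singleton_apply C 0 rfl x
  have h1 := κ.transition_insertNth le_rfl hC 1 (isCopula_properMarg hC {1})
    fun x _ => properMarg_singleton_apply C 1 rfl x
  have h2 := κ.transition_insertNth le_rfl hC 2 (isCopula_properMarg hC {2})
    fun x _ => properMarg_singleton_apply C 2 rfl x
  simp only [Nat.reduceAdd] at h0 h1 h2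
  have hrsp := κ.rsp 3 (by norm_num) C hC
  rw [sum_finset_fin_three_of_compl _ (κ.kappa_reflTrans_compl (by norm_num) hC),
    reflTrans_empty] at hrsp
  have hsum : κ.r 2 * (κ.κ 2 (properMarg C {0}) + κ.κ 2 (properMarg C {1}) +
      κ.κ 2 (properMarg C {2})) = 2 * κ.κ 3 C := by
    linear_combination h0 + h1 + h2 + hrsp / 2
  -- `ring1!` sees through `({k}ᶜ : Finset (Fin 3)).card = 2` in the goal.
  refine ⟨?_, ?_⟩
  · linear_combination (norm := ring1!) (-(1/2) * κ.r 3) * hsum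
  · rw [hr2] at hsum
    linear_combination (norm := ring1!) (-1/2) * hsum

end
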